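/- Let E be a pseudo-emetric space, let f : ℝ → E, let T ≥ 0, and let S be a finite subset of the interval (0, T] such that f has a left limit at every s ∈ S. Then the sum over s ∈ S of the extended distances edist (f s) (leftLim f s) is at most the extended-real variation eVariationOn f (Set.Icc 0 T) of f on [0, T]. -/
import Mathlib

open Filter Topology Set Function

private lemma tendsto_leftLim_of_exists {α β : Type*} [LinearOrder α] [hα : TopologicalSpace α]
    [h'α : OrderTopology α] [TopologicalSpace β] {f : α → β} {a : α}
    (h : 𝓝[<] a ≠ ⊥) (h' : ∃ y, Tendsto f (𝓝[<] a) (𝓝 y)) :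
    Tendsto f (𝓝[<] a) (𝓝 (leftLim f a)) := by
  have key : ∀ y, Tendsto f (𝓝[<] a) (𝓝 y) → Tendsto f (𝓝[<] a) (𝓝 (leftLim f a)) := by
    intro y hy
    rw [h'α.topology_eq_generate_intervals] at h h' hy ⊢
    simp only [Function.leftLim, h, h', not_true, or_self_iff, if_false]
    haveI := neBot_iff.2 h
    exact tendsto_nhds_limUnder ⟨y, hy⟩
  obtain ⟨y, hy⟩ := h'
  exact key y hy

private lemma jump_le_eVariationOn {E : Type*} [PseudoEMetricSpace E] (f : ℝ → E) {a s : ℝ}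
    (ha : a < s) (h : ∃ y, Tendsto f (𝓝[<] s) (𝓝 y)) :
    edist (f s) (leftLim f s) ≤ eVariationOn f (Set.Icc a s) := by
  have hne : (𝓝[<] s).NeBot := inferInstance
  have htl : Tendsto f (𝓝[<] s) (𝓝 (leftLim f s)) :=
    tendsto_leftLim_of_exists hne.ne h
  have hcont : Tendsto (fun x => edist (f s) (f x)) (𝓝[<] s)
      (𝓝 (edist (f s) (leftLim f s))) :=
    Filter.Tendsto.edist tendsto_const_nhds htl
  refine le_of_tendsto hcont ?_
  filter_upwards [Ioo_mem_nhdsLT_of_mem ⟨ha, le_refl s⟩] with x hx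
  rw [edist_comm]
  exact eVariationOn.edist_le f ⟨hx.1.le, hx.2.le⟩ ⟨ha.le, le_refl s⟩

private lemma sum_aux {E : Type*} [PseudoEMetricSpace E] (f : ℝ → E) (S : Finset ℝ) :
    ∀ T : ℝ, 0 ≤ T → (∀ s ∈ S, s ∈ Set.Ioc (0 : ℝ) T) →
      (∀ s ∈ S, ∃ y, Tendsto f (𝓝[<] s) (𝓝 y)) →
    ∑ s ∈ S, edist (f s) (leftLim f s) ≤ eVariationOn f (Set.Icc 0 T) := by
  induction S using Finset.strongInduction with
  | _ S ih =>
    intro T hT hS hlim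
    rcases S.eq_empty_or_nonempty with rfl | hne
    · simp
    · set m := S.max' hne with hm
      have hmS : m ∈ S := S.max'_mem hne
      have hm0 : 0 < m := (hS m hmS).1
      have hmT : m ≤ T := (hS m hmS).2
      set S' := S.erase m with hS'
      set a : ℝ := (insert (0:ℝ) S').max' (Finset.insert_nonempty _ _) with haa
      have ha0 : 0 ≤ a := Finset.le_max' _ 0 (Finset.mem_insert_self _ _)
      have ham : a < m := by
        rw [haa, Finset.max'_lt_iff]
        intro x hx
        rcases Finset.mem_insert.1 hx with rfl | hx
        · exact hm0
        · exact lt_of_le_of_ne (Finset.le_max' S x (Finset.mem_of_mem_erase hx))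
            (Finset.ne_of_mem_erase hx)
      have hS'sub : ∀ s ∈ S', s ∈ Set.Ioc (0:ℝ) a := fun s hs =>
        ⟨(hS s (Finset.mem_of_mem_erase hs)).1,
          Finset.le_max' _ s (Finset.mem_insert_of_mem hs)⟩
      have hsum' := ih S' (Finset.erase_ssubset hmS) a ha0 hS'sub
        (fun s hs => hlim s (Finset.mem_of_mem_erase hs))
      have hjump := jump_le_eVariationOn f ham (hlim m hmS)
      have hsplit : eVariationOn f (Set.Icc 0 a) + eVariationOn f (Set.Icc a m)
          = eVariationOn f (Set.Icc 0 m) := by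
        have := eVariationOn.Icc_add_Icc f (s := (Set.univ : Set ℝ)) ha0 ham.le (Set.mem_univ a)
        simpa using this
      calc ∑ s ∈ S, edist (f s) (leftLim f s)
          = ∑ s ∈ S', edist (f s) (leftLim f s) + edist (f m) (leftLim f m) := by
            rw [hS', Finset.sum_erase_add _ _ hmS]
        _ ≤ eVariationOn f (Set.Icc 0 a) + eVariationOn f (Set.Icc a m) :=
            add_le_add hsum' hjump
        _ = eVariationOn f (Set.Icc 0 m) := hsplit
        _ ≤ eVariationOn f (Set.Icc 0 T) :=
            eVariationOn.mono f (Set.Icc_subset_Icc le_rfl hmT)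

/-- The sum of the jump magnitudes of `f` at a finite set of times in `(0, T]` is bounded
by the total variation of `f` on `[0, T]` (used in the proof of Theorem 3.1(ii)). -/
theorem sum_edist_leftLim_le_eVariationOn {E : Type*} [PseudoEMetricSpace E]
    (f : ℝ → E) (T : ℝ) (hT : 0 ≤ T) (S : Finset ℝ)
    (hS : ∀ s ∈ S, s ∈ Set.Ioc (0 : ℝ) T)
    (hlim : ∀ s ∈ S, ∃ y, Tendsto f (𝓝[<] s) (𝓝 y)) :
    ∑ s ∈ S, edist (f s) (leftLim f s) ≤ eVariationOn f (Set.Icc 0 T) := by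
  exact sum_aux f S T hT hS hlim
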